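/- arXiv:1205.6132 — 2 statements merged into one kernel-verified Lean document; each statement's English description precedes it below -/
import Mathlib

section
/- For any point P in the plane, any radius R > 0, and any real A > 1, the sum of 1/(1+|p|^2) over all integer lattice points p in Z^2 lying on the circle of center P and radius R with |p| ≥ A is bounded by C/A for some absolute constant C. -/
/-- Telescoping sum over `Icc N B`. -/
lemma tele_Icc (N : ℕ) : ∀ B : ℕ, N ≤ B + 1 →
    ∑ n ∈ Finset.Icc N B, ((n : ℝ)⁻¹ - ((n : ℝ) + 1)⁻¹) = (N : ℝ)⁻¹ - ((B : ℝ) + 1)⁻¹ := by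
  intro B
  induction B with
  | zero =>
    intro h
    interval_cases N <;> norm_num
  | succ B ih =>
    intro h
    by_cases hNB : N ≤ B + 1
    · rw [← Finset.insert_Icc_right_eq_Icc_add_one hNB, Finset.sum_insert (by simp), ih hNB]
      push_cast
      ring
    · have hN : N = B + 2 := le_antisymm h (by omega)
      subst hN
      rw [Finset.Icc_eq_empty (by omega)]
      push_cast
      ring_nf

/-- Telescoping bound for arbitrary finsets of naturals that are `≥ N`. -/
lemma tele_sum (N : ℕ) (hN : 1 ≤ N) (T : Finset ℕ) (hT : ∀ n ∈ T, N ≤ n) :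
    ∑ n ∈ T, ((n : ℝ)⁻¹ - ((n : ℝ) + 1)⁻¹) ≤ (N : ℝ)⁻¹ := by
  rcases T.eq_empty_or_nonempty with rfl | hne
  · simp
  · set B := T.sup id with hB
    have hsub : T ⊆ Finset.Icc N B := fun n hn =>
      Finset.mem_Icc.mpr ⟨hT n hn, Finset.le_sup (f := id) hn⟩
    have hnonneg : ∀ n ∈ Finset.Icc N B, n ∉ T → (0:ℝ) ≤ (n : ℝ)⁻¹ - ((n : ℝ) + 1)⁻¹ := by
      intro n hn _
      have hn1 : 1 ≤ n := le_trans hN (Finset.mem_Icc.mp hn).1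
      have h0 : (0:ℝ) < (n : ℝ) := by exact_mod_cast hn1
      have : ((n : ℝ) + 1)⁻¹ ≤ (n : ℝ)⁻¹ := by
        apply inv_anti₀ h0
        linarith
      linarith
    have hle := Finset.sum_le_sum_of_subset_of_nonneg hsub hnonneg
    obtain ⟨n, hn⟩ := hne
    have hNB : N ≤ B + 1 := le_trans (hT n hn) (le_trans (Finset.le_sup (f := id) hn) (by omega))
    rw [tele_Icc N B hNB] at hle
    have : (0:ℝ) ≤ ((B : ℝ) + 1)⁻¹ := by positivity
    linarith

/-- Sum of `1/(1+x^2)` over integers with `|x| ≥ M` is at most `4/M`. -/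
lemma int_inv_sum (T : Finset ℤ) (M : ℝ) (hM : 0 < M)
    (h : ∀ x ∈ T, M ≤ |(x : ℝ)|) :
    ∑ x ∈ T, (1 + (x : ℝ) ^ 2)⁻¹ ≤ 4 / M := by
  set N : ℕ := max 1 ⌈M⌉₊ with hNdef
  have hN1 : 1 ≤ N := le_max_left _ _
  have hNM : M ≤ (N : ℝ) := by
    have h1 : M ≤ (⌈M⌉₊ : ℝ) := Nat.le_ceil M
    have h2 : (⌈M⌉₊ : ℕ) ≤ N := le_max_right _ _
    exact h1.trans (by exact_mod_cast h2)
  -- every element has natAbs ≥ N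
  have hbig : ∀ x ∈ T, N ≤ x.natAbs := by
    intro x hx
    have h1 : M ≤ |(x : ℝ)| := h x hx
    have habs : |(x : ℝ)| = (x.natAbs : ℝ) := by
      rw [← Int.cast_abs, Int.abs_eq_natAbs, Int.cast_natCast]
    rw [habs] at h1
    have hceil : ⌈M⌉₊ ≤ x.natAbs := Nat.ceil_le.mpr h1
    have hx0 : 1 ≤ x.natAbs := by
      by_contra hc
      have : x.natAbs = 0 := by omega
      rw [this] at h1
      simp at h1
      linarith
    omega
  -- termwise bound
  have hterm : ∀ x ∈ T, (1 + (x : ℝ) ^ 2)⁻¹ ≤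
      2 * (((x.natAbs : ℕ) : ℝ)⁻¹ - (((x.natAbs : ℕ) : ℝ) + 1)⁻¹) := by
    intro x hx
    set n : ℕ := x.natAbs with hn
    have hn1 : 1 ≤ n := le_trans hN1 (hbig x hx)
    have hnR : (1:ℝ) ≤ (n : ℝ) := by exact_mod_cast hn1
    have habs2 : |(x : ℝ)| = (n : ℝ) := by
      rw [hn, ← Int.cast_abs, Int.abs_eq_natAbs, Int.cast_natCast]
    have hxn : (x : ℝ) ^ 2 = (n : ℝ) ^ 2 := by
      rw [← habs2, sq_abs]
    rw [hxn]
    have h1 : ((n : ℝ))⁻¹ - ((n : ℝ) + 1)⁻¹ = ((n : ℝ) * ((n : ℝ) + 1))⁻¹ := by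
      rw [inv_sub_inv (by linarith) (by linarith)]
      ring_nf
    rw [h1, ← one_div, ← div_eq_mul_inv, div_le_div_iff₀ (by positivity) (by positivity)]
    nlinarith
  have hstep := Finset.sum_le_sum hterm
  refine le_trans hstep ?_
  -- group by natAbs
  rw [Finset.sum_comp (fun n : ℕ => 2 * ((n : ℝ)⁻¹ - ((n : ℝ) + 1)⁻¹)) Int.natAbs]
  have hfib : ∀ n ∈ T.image Int.natAbs, ({x ∈ T | x.natAbs = n} : Finset ℤ).card ≤ 2 := by
    intro n _
    have hsub : ({x ∈ T | x.natAbs = n} : Finset ℤ) ⊆ {(n : ℤ), -(n : ℤ)} := by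
      intro x hx
      rcases Finset.mem_filter.mp hx with ⟨_, hxn⟩
      rcases Int.natAbs_eq x with h' | h'
      · exact Finset.mem_insert.mpr (Or.inl (by rw [h', hxn]))
      · refine Finset.mem_insert.mpr (Or.inr ?_)
        rw [Finset.mem_singleton, h', hxn]
    exact le_trans (Finset.card_le_card hsub)
      (le_trans (Finset.card_insert_le _ _) (by simp))
  have hpos : ∀ n ∈ T.image Int.natAbs, (0:ℝ) ≤ (n : ℝ)⁻¹ - ((n : ℝ) + 1)⁻¹ := by
    intro n hn
    obtain ⟨x, hx, rfl⟩ := Finset.mem_image.mp hn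
    have hn1 : 1 ≤ x.natAbs := le_trans hN1 (hbig x hx)
    have h0 : (0:ℝ) < (x.natAbs : ℝ) := by exact_mod_cast hn1
    have : ((x.natAbs : ℝ) + 1)⁻¹ ≤ (x.natAbs : ℝ)⁻¹ := by
      apply inv_anti₀ h0
      linarith
    linarith
  have hmid : ∑ n ∈ T.image Int.natAbs,
      ({x ∈ T | x.natAbs = n} : Finset ℤ).card • (2 * ((n : ℝ)⁻¹ - ((n : ℝ) + 1)⁻¹)) ≤
      ∑ n ∈ T.image Int.natAbs, 4 * ((n : ℝ)⁻¹ - ((n : ℝ) + 1)⁻¹) := by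
    apply Finset.sum_le_sum
    intro n hn
    rw [nsmul_eq_mul]
    have h2 := hfib n hn
    have h3 := hpos n hn
    have hcard : (({x ∈ T | x.natAbs = n} : Finset ℤ).card : ℝ) ≤ 2 := by exact_mod_cast h2
    nlinarith
  refine le_trans hmid ?_
  rw [← Finset.mul_sum]
  have htel := tele_sum N hN1 (T.image Int.natAbs) (by
    intro n hn
    obtain ⟨x, hx, rfl⟩ := Finset.mem_image.mp hn
    exact hbig x hx)
  have h4N : 4 * ((N:ℝ))⁻¹ ≤ 4 / M := by
    rw [div_eq_mul_inv]
    have hNpos : (0:ℝ) < N := by exact_mod_cast hN1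
    have : M⁻¹ ≥ ((N:ℝ))⁻¹ := by
      apply inv_anti₀ hM hNM
    linarith
  linarith

/-- Fibers of the first coordinate on a finset of lattice points lying on a circle
have at most 2 elements. -/
lemma circle_fiber (s : Finset (ℤ × ℤ)) (a b R : ℝ)
    (hcirc : ∀ p ∈ s, ((p.1 : ℝ) - a) ^ 2 + ((p.2 : ℝ) - b) ^ 2 = R ^ 2) (x : ℤ) :
    ({p ∈ s | p.1 = x} : Finset (ℤ × ℤ)).card ≤ 2 := by
  have hinj : Set.InjOn (fun p : ℤ × ℤ => decide ((p.2 : ℝ) ≤ b))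
      ({p ∈ s | p.1 = x} : Finset (ℤ × ℤ)) := by
    intro p hp q hq hpq
    simp only [Finset.coe_filter, Set.mem_setOf_eq] at hp hq
    have h1 := hcirc p hp.1
    have h2 := hcirc q hq.1
    rw [hp.2] at h1
    rw [hq.2] at h2
    have hsq : ((p.2 : ℝ) - b) ^ 2 = ((q.2 : ℝ) - b) ^ 2 := by linarith
    have hbool : ((p.2 : ℝ) ≤ b) ↔ ((q.2 : ℝ) ≤ b) := by
      constructor <;> intro h
      · by_contra hc
        simp only [decide_eq_decide] at hpq
        exact hc (hpq.mp h)
      · by_contra hc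
        simp only [decide_eq_decide] at hpq
        exact hc (hpq.mpr h)
    have heq : (p.2 : ℝ) = (q.2 : ℝ) := by
      have habs := (sq_eq_sq_iff_abs_eq_abs _ _).mp hsq
      rcases abs_eq_abs.mp habs with h' | h'
      · linarith
      · by_cases hle : (p.2 : ℝ) ≤ b
        · have hle' : (q.2 : ℝ) ≤ b := hbool.mp hle
          linarith
        · have hle' : ¬ (q.2 : ℝ) ≤ b := fun hh => hle (hbool.mpr hh)
          push_neg at hle'
          push_neg at hle
          linarith
    have h2eq : p.2 = q.2 := by exact_mod_cast heq
    exact Prod.ext (hp.2.trans hq.2.symm) h2eq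
  have := Finset.card_le_card_of_injOn (fun p : ℤ × ℤ => decide ((p.2 : ℝ) ≤ b))
    (fun _ _ => Finset.mem_univ _) hinj
  simpa using this

/-- Summing `1/(1+x^2)` over lattice points on a circle whose first coordinates are
`≥ A/2` in absolute value. -/
lemma coord_sum (s : Finset (ℤ × ℤ)) (a b R A : ℝ) (hA : 0 < A)
    (hcirc : ∀ p ∈ s, ((p.1 : ℝ) - a) ^ 2 + ((p.2 : ℝ) - b) ^ 2 = R ^ 2)
    (hbig : ∀ p ∈ s, A / 2 ≤ |((p.1 : ℤ) : ℝ)|) :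
    ∑ p ∈ s, (1 + ((p.1 : ℤ) : ℝ) ^ 2)⁻¹ ≤ 16 / A := by
  rw [Finset.sum_comp (fun x : ℤ => (1 + (x : ℝ) ^ 2)⁻¹) Prod.fst]
  have hstep : ∑ x ∈ s.image Prod.fst,
      ({p ∈ s | p.1 = x} : Finset (ℤ × ℤ)).card • (1 + (x : ℝ) ^ 2)⁻¹ ≤
      ∑ x ∈ s.image Prod.fst, 2 * (1 + (x : ℝ) ^ 2)⁻¹ := by
    apply Finset.sum_le_sum
    intro x hx
    rw [nsmul_eq_mul]
    have h2 := circle_fiber s a b R hcirc x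
    have hcard : (({p ∈ s | p.1 = x} : Finset (ℤ × ℤ)).card : ℝ) ≤ 2 := by exact_mod_cast h2
    have hnn : (0:ℝ) ≤ (1 + (x : ℝ) ^ 2)⁻¹ := by positivity
    nlinarith
  refine le_trans hstep ?_
  rw [← Finset.mul_sum]
  have hint := int_inv_sum (s.image Prod.fst) (A / 2) (by linarith) (by
    intro x hx
    obtain ⟨p, hp, rfl⟩ := Finset.mem_image.mp hx
    exact hbig p hp)
  have : 2 * (4 / (A / 2)) = 16 / A := by
    field_simp
    norm_num
  linarith [mul_le_mul_of_nonneg_left hint (by norm_num : (0:ℝ) ≤ 2)]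

/-- Lattice points on a circle: for any center `P`, radius `R > 0` and `A > 1`, the sum of
`1/(1+|p|^2)` over integer points `p ∈ ℤ²` on the circle `C(P,R)` with `|p| ≥ A` is `≲ 1/A`.
(Stated for arbitrary finite subsets of such lattice points, which is equivalent since all
terms are nonnegative.) -/
theorem stmt_0 :
    ∃ C : ℝ, 0 < C ∧ ∀ (P : ℝ × ℝ) (R A : ℝ), 0 < R → 1 < A →
      ∀ s : Finset (ℤ × ℤ),
        (∀ p ∈ s, ((p.1 : ℝ) - P.1) ^ 2 + ((p.2 : ℝ) - P.2) ^ 2 = R ^ 2 ∧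
          A ≤ Real.sqrt ((p.1 : ℝ) ^ 2 + (p.2 : ℝ) ^ 2)) →
        ∑ p ∈ s, (1 + ((p.1 : ℝ) ^ 2 + (p.2 : ℝ) ^ 2))⁻¹ ≤ C / A := by
  refine ⟨32, by norm_num, ?_⟩
  intro P R A hR hA s hs
  have hA0 : (0:ℝ) < A := by linarith
  -- squared lower bound
  have key : ∀ p ∈ s, A ^ 2 ≤ (p.1 : ℝ) ^ 2 + (p.2 : ℝ) ^ 2 := by
    intro p hp
    have h := (hs p hp).2
    have hnn : (0:ℝ) ≤ (p.1 : ℝ) ^ 2 + (p.2 : ℝ) ^ 2 := by positivity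
    nlinarith [Real.sq_sqrt hnn, Real.sqrt_nonneg ((p.1 : ℝ) ^ 2 + (p.2 : ℝ) ^ 2)]
  classical
  rw [← Finset.sum_filter_add_sum_filter_not s (fun p : ℤ × ℤ => p.2 ^ 2 ≤ p.1 ^ 2)]
  set sx := {p ∈ s | p.2 ^ 2 ≤ p.1 ^ 2} with hsx
  set sy := {p ∈ s | ¬ p.2 ^ 2 ≤ p.1 ^ 2} with hsy
  -- bound on sx
  have habsx : ∀ p ∈ sx, A / 2 ≤ |((p.1 : ℤ) : ℝ)| := by
    intro p hp
    rcases Finset.mem_filter.mp hp with ⟨hps, hxy⟩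
    have hxyR : ((p.2 : ℝ)) ^ 2 ≤ ((p.1 : ℝ)) ^ 2 := by exact_mod_cast hxy
    have h1 := key p hps
    have h2 : (A / 2) ^ 2 ≤ ((p.1 : ℝ)) ^ 2 := by nlinarith
    nlinarith [sq_abs ((p.1 : ℝ)), abs_nonneg ((p.1 : ℝ))]
  have hx : ∑ p ∈ sx, (1 + ((p.1 : ℝ) ^ 2 + (p.2 : ℝ) ^ 2))⁻¹ ≤ 16 / A := by
    have hb : ∑ p ∈ sx, (1 + ((p.1 : ℝ) ^ 2 + (p.2 : ℝ) ^ 2))⁻¹ ≤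
        ∑ p ∈ sx, (1 + ((p.1 : ℤ) : ℝ) ^ 2)⁻¹ := by
      apply Finset.sum_le_sum
      intro p hp
      apply inv_anti₀ (by positivity)
      nlinarith [sq_nonneg ((p.2 : ℝ))]
    refine hb.trans ?_
    apply coord_sum sx P.1 P.2 R A hA0
    · intro p hp
      exact (hs p (Finset.mem_filter.mp hp).1).1
    · exact habsx
  -- bound on sy via swapping coordinates
  have hy : ∑ p ∈ sy, (1 + ((p.1 : ℝ) ^ 2 + (p.2 : ℝ) ^ 2))⁻¹ ≤ 16 / A := by
    have hb : ∑ p ∈ sy, (1 + ((p.1 : ℝ) ^ 2 + (p.2 : ℝ) ^ 2))⁻¹ ≤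
        ∑ p ∈ sy, (1 + ((p.2 : ℤ) : ℝ) ^ 2)⁻¹ := by
      apply Finset.sum_le_sum
      intro p hp
      apply inv_anti₀ (by positivity)
      nlinarith [sq_nonneg ((p.1 : ℝ))]
    refine hb.trans ?_
    have himg : ∑ p ∈ sy, (1 + ((p.2 : ℤ) : ℝ) ^ 2)⁻¹ =
        ∑ q ∈ sy.image Prod.swap, (1 + ((q.1 : ℤ) : ℝ) ^ 2)⁻¹ := by
      rw [Finset.sum_image (fun x _ y _ h => Prod.swap_injective h)]
      rfl
    rw [himg]
    apply coord_sum (sy.image Prod.swap) P.2 P.1 R A hA0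
    · intro q hq
      obtain ⟨p, hp, rfl⟩ := Finset.mem_image.mp hq
      have := (hs p (Finset.mem_filter.mp hp).1).1
      simp only [Prod.fst_swap, Prod.snd_swap]
      linarith
    · intro q hq
      obtain ⟨p, hp, rfl⟩ := Finset.mem_image.mp hq
      rcases Finset.mem_filter.mp hp with ⟨hps, hxy⟩
      push_neg at hxy
      have hxyR : ((p.1 : ℝ)) ^ 2 ≤ ((p.2 : ℝ)) ^ 2 := by
        have : p.1 ^ 2 ≤ p.2 ^ 2 := le_of_lt hxy
        exact_mod_cast this
      have h1 := key p hps
      have h2 : (A / 2) ^ 2 ≤ ((p.2 : ℝ)) ^ 2 := by nlinarith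
      simp only [Prod.fst_swap]
      nlinarith [sq_abs ((p.2 : ℝ)), abs_nonneg ((p.2 : ℝ))]
  have : (32:ℝ) / A = 16 / A + 16 / A := by ring
  rw [this]
  exact add_le_add hx hy
end

section
/- With c_m = Σ_{q∈S} Σ_{0≤a≤q-1, gcd(a,q)=1} e^{-2πim a/q} for S ⊆ {1,...,Q}, for every κ > 0 there is C_κ such that |c_m| ≤ C_κ · d(m,Q) · Q^{1+κ}, where d(m,Q) is the number of divisors of m that are ≤ Q. -/
/-- The Ramanujan-type exponential sums
`c_m = Σ_{q ∈ S} Σ_{0 ≤ a ≤ q-1, gcd(a,q)=1} e^{-2πi m a/q}`. -/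
noncomputable def cM (S : Finset ℕ) (m : ℤ) : ℂ :=
  ∑ q ∈ S, ∑ a ∈ Finset.range q,
    if Nat.gcd a q = 1 then
      Complex.exp (-(2 * (Real.pi : ℂ) * Complex.I * (m : ℂ) * (a : ℂ) / (q : ℂ))) else 0

/-- `d(m,Q)`: the number of divisors of `m` that are at most `Q`. -/
def divCount (m : ℤ) (Q : ℕ) : ℕ :=
  ((Finset.Icc 1 Q).filter fun q : ℕ => (q : ℤ) ∣ m).card

/-!
Inserting `∑_{d ∣ gcd(a,q)} μ(d)` for the coprimality condition and summing the geometric series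
over the multiples of `d` gives `c_q(m) = ∑_{d ∣ q} μ(d) (q/d) [q/d ∣ m]`, hence
`|c_q(m)| ≤ ∑_{e ∣ q, e ∣ m} e`. Summing over `q ∈ S` and swapping the sums, each divisor `e ≤ Q`
of `m` is counted with weight `e · #{q ∈ S : e ∣ q} ≤ Q`, so `|c_m| ≤ d(m,Q) · Q`, and `C_κ = 1`
works.
-/

open Finset ArithmeticFunction Complex
open scoped Real ArithmeticFunction.Moebius

theorem exp_neg_two_pi_I_mul_div_eq_one_iff {q : ℕ} (hq : q ≠ 0) (m : ℤ) :
    exp (-(2 * π * I * m / q)) = 1 ↔ (q : ℤ) ∣ m := by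
  rw [Complex.exp_eq_one_iff]
  constructor
  · rintro ⟨n, hn⟩
    refine ⟨-n, ?_⟩
    have h : (m : ℂ) = (q * -n : ℤ) := by
      field_simp at hn
      push_cast
      linear_combination -hn
    exact_mod_cast h
  · rintro ⟨k, rfl⟩
    exact ⟨-k, by push_cast; field_simp⟩

theorem sum_range_exp_neg_two_pi_I_mul_div (q : ℕ) (m : ℤ) :
    ∑ a ∈ range q, exp (-(2 * π * I * m * a / q)) = if (q : ℤ) ∣ m then (q : ℂ) else 0 := by
  rcases eq_or_ne q 0 with rfl | hq
  · simp
  set z := exp (-(2 * π * I * m / q))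
  have hpow (a : ℕ) : exp (-(2 * π * I * m * a / q)) = z ^ a := by
    rw [← Complex.exp_nat_mul]; ring_nf
  simp_rw [hpow]
  split_ifs with hdvd
  · simp [z, (exp_neg_two_pi_I_mul_div_eq_one_iff hq m).2 hdvd]
  · have hzq : z ^ q = 1 := by
      rw [← hpow, mul_div_assoc, div_self (Nat.cast_ne_zero.mpr hq), mul_one]
      exact Complex.exp_eq_one_iff.2 ⟨-m, by push_cast; ring⟩
    rw [geom_sum_eq ((exp_neg_two_pi_I_mul_div_eq_one_iff hq m).not.2 hdvd), hzq, sub_self,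
      zero_div]

theorem sum_moebius_divisors {R : Type*} [Ring R] (n : ℕ) :
    ∑ d ∈ n.divisors, (μ d : R) = if n = 1 then 1 else 0 := by
  have h := congrArg (· n) (coe_moebius_mul_coe_zeta (R := R))
  simp only [coe_mul_zeta_apply, one_apply, intCoe_apply] at h
  exact h

theorem sum_range_filter_dvd {M : Type*} [AddCommMonoid M] {d q : ℕ} (hd : d ∣ q)
    (w : ℕ → M) :
    ∑ a ∈ range q with d ∣ a, w a = ∑ b ∈ range (q / d), w (d * b) := by
  rcases eq_or_ne d 0 with rfl | hd0
  · simp [zero_dvd_iff.1 hd]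
  obtain ⟨k, rfl⟩ := hd
  rw [Nat.mul_div_cancel_left k (Nat.pos_of_ne_zero hd0),
    ← sum_image fun _ _ _ _ h => Nat.eq_of_mul_eq_mul_left (Nat.pos_of_ne_zero hd0) h]
  congr 1
  ext a
  simp only [mem_filter, mem_range, mem_image]
  constructor
  · rintro ⟨ha, b, rfl⟩
    exact ⟨b, Nat.lt_of_mul_lt_mul_left ha, rfl⟩
  · rintro ⟨b, hb, rfl⟩
    exact ⟨Nat.mul_lt_mul_of_pos_left hb (Nat.pos_of_ne_zero hd0), dvd_mul_right d b⟩

theorem divisors_gcd_eq_filter_dvd (a : ℕ) {q : ℕ} (hq : q ≠ 0) :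
    (Nat.gcd a q).divisors = {d ∈ q.divisors | d ∣ a} := by
  ext d
  simp only [Nat.mem_divisors, mem_filter, Nat.dvd_gcd_iff, ne_eq, Nat.gcd_eq_zero_iff, hq,
    and_false, not_false_eq_true, and_true]
  tauto

theorem sum_range_coprime_eq_sum_divisors_moebius {R : Type*} [Ring R] (q : ℕ) (w : ℕ → R) :
    (∑ a ∈ range q, if Nat.gcd a q = 1 then w a else 0) =
      ∑ d ∈ q.divisors, (μ d : R) * ∑ b ∈ range (q / d), w (d * b) := by
  rcases eq_or_ne q 0 with rfl | hq
  · simp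
  have hind (a : ℕ) : (if Nat.gcd a q = 1 then w a else 0) =
      ∑ d ∈ q.divisors, if d ∣ a then (μ d : R) * w a else 0 := by
    rw [← sum_filter, ← sum_mul, ← divisors_gcd_eq_filter_dvd a hq, sum_moebius_divisors]
    split_ifs <;> simp
  simp_rw [hind]
  rw [sum_comm]
  refine sum_congr rfl fun d hd => ?_
  rw [← sum_range_filter_dvd (Nat.dvd_of_mem_divisors hd), mul_sum, sum_filter]

noncomputable def ramanujanSum (q : ℕ) (m : ℤ) : ℂ :=
  ∑ a ∈ range q, if Nat.gcd a q = 1 then exp (-(2 * π * I * m * a / q)) else 0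

theorem cM_eq_sum_ramanujanSum (S : Finset ℕ) (m : ℤ) :
    cM S m = ∑ q ∈ S, ramanujanSum q m :=
  rfl

theorem ramanujanSum_eq_sum_divisors_moebius (q : ℕ) (m : ℤ) :
    ramanujanSum q m =
      ∑ d ∈ q.divisors, (μ d : ℂ) * if ((q / d : ℕ) : ℤ) ∣ m then ((q / d : ℕ) : ℂ) else 0 := by
  rw [ramanujanSum, sum_range_coprime_eq_sum_divisors_moebius]
  refine sum_congr rfl fun d hd => ?_
  have hd0 : (d : ℂ) ≠ 0 := Nat.cast_ne_zero.mpr (Nat.pos_of_mem_divisors hd).ne'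
  have hq : (q : ℂ) = d * (q / d : ℕ) := by
    exact_mod_cast (Nat.mul_div_cancel' (Nat.dvd_of_mem_divisors hd)).symm
  rw [← sum_range_exp_neg_two_pi_I_mul_div]
  congr 2 with b
  rw [hq]
  push_cast
  field_simp

theorem norm_ramanujanSum_le (q : ℕ) (m : ℤ) :
    ‖ramanujanSum q m‖ ≤ ∑ e ∈ q.divisors with ↑e ∣ m, (e : ℝ) := by
  rw [ramanujanSum_eq_sum_divisors_moebius, sum_filter,
    ← Nat.sum_div_divisors q fun e => if (e : ℤ) ∣ m then (e : ℝ) else 0]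
  refine (norm_sum_le _ _).trans (sum_le_sum fun d _ => ?_)
  have hμ : ‖(μ d : ℂ)‖ ≤ 1 := by
    rw [Complex.norm_intCast]; exact_mod_cast abs_moebius_le_one
  rw [norm_mul]
  split_ifs
  · rw [Complex.norm_natCast]
    exact mul_le_of_le_one_left (Nat.cast_nonneg _) hμ
  · simp

theorem card_filter_dvd_mul_le {S : Finset ℕ} {Q : ℕ} (hS : S ⊆ Icc 1 Q) (e : ℕ) :
    #{q ∈ S | e ∣ q} * e ≤ Q := by
  have hcard : #{q ∈ S | e ∣ q} ≤ Q / e := by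
    rw [← Nat.Ioc_filter_dvd_card_eq_div, ← Finset.Icc_succ_left_eq_Ioc]
    exact card_le_card (filter_subset_filter _ hS)
  exact (Nat.mul_le_mul_right e hcard).trans (Nat.div_mul_le_self Q e)

theorem sum_sum_divisors_dvd_le {S : Finset ℕ} {Q : ℕ} (hS : S ⊆ Icc 1 Q) (m : ℤ) :
    ∑ q ∈ S, ∑ e ∈ q.divisors with ↑e ∣ m, (e : ℝ) ≤ divCount m Q * Q := by
  rw [sum_comm' (t' := {e ∈ Icc 1 Q | ↑e ∣ m}) (s' := fun e => {q ∈ S | e ∣ q})]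
  · calc ∑ e ∈ Icc 1 Q with ↑e ∣ m, ∑ q ∈ S with e ∣ q, (e : ℝ)
        ≤ ∑ e ∈ Icc 1 Q with ↑e ∣ m, (Q : ℝ) := by
          refine sum_le_sum fun e _ => ?_
          rw [sum_const, nsmul_eq_mul]
          exact_mod_cast card_filter_dvd_mul_le hS e
      _ = divCount m Q * Q := by rw [sum_const, nsmul_eq_mul, divCount]
  · intro q e
    have hqQ : q ∈ S → 0 < q ∧ q ≤ Q := fun hq => mem_Icc.1 (hS hq)
    simp only [mem_filter, Nat.mem_divisors, mem_Icc]
    constructor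
    · rintro ⟨hq, ⟨he, -⟩, hem⟩
      obtain ⟨hq0, hqQ⟩ := hqQ hq
      exact ⟨⟨hq, he⟩, ⟨Nat.pos_of_dvd_of_pos he hq0, (Nat.le_of_dvd hq0 he).trans hqQ⟩, hem⟩
    · rintro ⟨⟨hq, he⟩, -, hem⟩
      exact ⟨hq, ⟨he, (hqQ hq).1.ne'⟩, hem⟩

theorem norm_cM_le {S : Finset ℕ} {Q : ℕ} (hS : S ⊆ Icc 1 Q) (m : ℤ) :
    ‖cM S m‖ ≤ divCount m Q * Q := by
  rw [cM_eq_sum_ramanujanSum]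
  calc ‖∑ q ∈ S, ramanujanSum q m‖ ≤ ∑ q ∈ S, ∑ e ∈ q.divisors with ↑e ∣ m, (e : ℝ) :=
        (norm_sum_le _ _).trans (sum_le_sum fun q _ => norm_ramanujanSum_le q m)
    _ ≤ divCount m Q * Q := sum_sum_divisors_dvd_le hS m

theorem natCast_le_rpow {y : ℝ} (hy : 1 ≤ y) (n : ℕ) : (n : ℝ) ≤ (n : ℝ) ^ y := by
  rcases eq_or_ne n 0 with rfl | hn
  · simpa using Real.rpow_nonneg le_rfl y
  exact Real.self_le_rpow_of_one_le (by exact_mod_cast Nat.one_le_iff_ne_zero.2 hn) hy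

/-- For every `κ > 0` there is `C_κ` such that `|c_m| ≤ C_κ · d(m,Q) · Q^{1+κ}`, where `d(m,Q)`
is the number of divisors of `m` at most `Q` and `c_m` sums Ramanujan sums over `q ∈ S ⊆ {1,…,Q}`. -/
theorem stmt_8 (κ : ℝ) (hκ : 0 < κ) :
    ∃ C : ℝ, 0 < C ∧ ∀ (Q : ℕ) (S : Finset ℕ), S ⊆ Finset.Icc 1 Q → ∀ m : ℤ,
      ‖cM S m‖ ≤ C * (divCount m Q : ℝ) * (Q : ℝ) ^ ((1 : ℝ) + κ) := by
  refine ⟨1, one_pos, fun Q S hS m => ?_⟩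
  rw [one_mul]
  exact (norm_cM_le hS m).trans (by gcongr; exact natCast_le_rpow (by linarith) Q)
end
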